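/- arXiv:1006.5134 — 3 statements merged into one kernel-verified Lean document; each statement's English description precedes it below -/
import Mathlib

section
/- For every integer p ≥ 1, the sum f(p) = Σ_{i=1}^{2p-1} (-1)^i C(2p,i) C(-2p, 2p-1-i) C(-2p, i-1) equals (-1)^p * 2 * (3p-2)! / ((2p-1) * ((p-1)!)^3). -/
/-!
Writing `C(-n, k) = (-1)^k C(n+k-1, k)`, the summand becomes, with `i = j + 1` and
`k = 2p - 1 - i`, the hypergeometric term `T(j, k) = (-1)^(j+1) C(j+k+2, j+1) C(j+2k+1, k)
C(2j+k+1, j)` summed over the antidiagonal `j + k = 2p - 2`. Zeilberger's creative telescoping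
gives an explicit certificate `W` with
`(n+3)(n+2)^3 T(j, k+2) + (3n+8)(3n+6)(3n+4)(n+1) T(j, k) = W(j+1, k) - W(j, k+1)` for `j + k = n`;
summing along the antidiagonal, the sums `S(n)` satisfy a first-order recurrence in steps of two,
which the closed form satisfies as well, and both agree at `p = 1`.
-/

/-- Generalized binomial coefficient `C(t,k) = t(t-1)⋯(t-k+1)/k!`. -/
def gchoose (t : ℚ) (k : ℕ) : ℚ := (∏ j ∈ Finset.range k, (t - j)) / (Nat.factorial k)

open Finset Nat

theorem gchoose_eq_descPochhammer_eval (t : ℚ) (k : ℕ) :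
    gchoose t k = (descPochhammer ℚ k).eval t / k ! := by
  rw [gchoose, descPochhammer_eval_eq_prod_range]

theorem gchoose_natCast (n k : ℕ) : gchoose n k = n.choose k := by
  rw [gchoose_eq_descPochhammer_eval, descPochhammer_eval_eq_descFactorial,
    descFactorial_eq_factorial_mul_choose, cast_mul, mul_div_cancel_left₀ _ (by positivity)]

theorem gchoose_neg (t : ℚ) (k : ℕ) : gchoose (-t) k = (-1) ^ k * gchoose (t + k - 1) k := by
  rw [gchoose_eq_descPochhammer_eval, gchoose_eq_descPochhammer_eval,
    descPochhammer_eval_eq_ascPochhammer, show -t - k + 1 = -(t + k - 1) by ring,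
    ascPochhammer_eval_neg_eq_descPochhammer, mul_div_assoc]

theorem gchoose_neg_natCast (n k : ℕ) :
    gchoose (-(n + 1 : ℕ)) k = (-1) ^ k * (k + n).choose k := by
  rw [gchoose_neg, ← gchoose_natCast]
  push_cast
  ring_nf

theorem sum_antidiagonal_sub {M : Type*} [AddCommGroup M] (f : ℕ → ℕ → M) (n : ℕ) :
    ∑ x ∈ antidiagonal n, (f (x.1 + 1) x.2 - f x.1 (x.2 + 1)) = f (n + 1) 0 - f 0 (n + 1) := by
  induction n generalizing f with
  | zero => simp
  | succ n ih =>
    rw [Nat.sum_antidiagonal_succ, ih (fun a b => f (a + 1) b)]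
    abel

theorem eq_of_linear_recurrence {K : Type*} [Field K] {u v c d : ℕ → K} (hc : ∀ q, c q ≠ 0)
    (hu : ∀ q, c q * u (q + 1) + d q * u q = 0) (hv : ∀ q, c q * v (q + 1) + d q * v q = 0)
    (h0 : u 0 = v 0) (q : ℕ) : u q = v q := by
  induction q with
  | zero => exact h0
  | succ q ih =>
    apply mul_left_cancel₀ (hc q)
    linear_combination hu q - hv q - d q * ih

def summand (p i : ℕ) : ℚ :=
  (-1 : ℚ) ^ i * gchoose (2 * p) i * gchoose (-2 * p) (2 * p - 1 - i) * gchoose (-2 * p) (i - 1)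

def wzTerm (j k : ℕ) : ℚ :=
  (-1) ^ (j + 1) * (j + k + 2).choose (j + 1) * (j + 2 * k + 1).choose k *
    (2 * j + k + 1).choose j

/-- Numerator of Zeilberger's certificate, in the variables `p`, `i` of the original sum. -/
def wzPoly (p i : ℚ) : ℚ :=
  (4 * p - 16 * p ^ 2 - 196 * p ^ 3 + 48 * p ^ 4 + 2256 * p ^ 5 + 2752 * p ^ 6) * i
  + (2 + 6 * p + 48 * p ^ 2 + 28 * p ^ 3 - 1784 * p ^ 4 - 5024 * p ^ 5 - 2752 * p ^ 6) * i ^ 2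
  + (-5 - 7 * p + 106 * p ^ 2 + 724 * p ^ 3 + 2736 * p ^ 4 + 2768 * p ^ 5) * i ^ 3
  + (2 - 36 * p - 258 * p ^ 2 - 716 * p ^ 3 - 1000 * p ^ 4) * i ^ 4
  + (4 + 50 * p + 134 * p ^ 2 + 160 * p ^ 3) * i ^ 5
  + (-4 - 18 * p - 14 * p ^ 2) * i ^ 6
  + (1 + p) * i ^ 7

/-- The certificate at `i = a + 1`, `2p = a + b + 1`. -/
def wzCert (a b : ℕ) : ℚ :=
  2 * wzPoly ((a + b + 1) / 2) (a + 1) * (-1) ^ (a + 1) * (a + b + 1)! * (a + 2 * b - 1)! *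
    (2 * a + b)! / ((a + 1)! * a ! * (a + b)! ^ 2 * (b + 2)! * (b + 1)!)

def closedForm (q : ℕ) : ℚ := (-1) ^ (q + 1) * 2 * (3 * q + 1)! / ((2 * q + 1) * q ! ^ 3)

theorem summand_eq_wzTerm (q j k : ℕ) (h : j + k = 2 * q) :
    summand (q + 1) (j + 1) = wzTerm j k := by
  have hcast : (j : ℚ) + k = 2 * q := by exact_mod_cast h
  have hpos : 2 * ((q + 1 : ℕ) : ℚ) = ((j + k + 2 : ℕ) : ℚ) := by push_cast; linarith
  have hneg : -2 * ((q + 1 : ℕ) : ℚ) = -((j + k + 1 + 1 : ℕ) : ℚ) := by push_cast; linarith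
  have hsign : (-1 : ℚ) ^ k * (-1) ^ j = 1 := by
    rw [← pow_add, add_comm, h, pow_mul]; norm_num
  rw [summand, show 2 * (q + 1) - 1 - (j + 1) = k by omega, add_tsub_cancel_right, hpos, hneg,
    gchoose_natCast, gchoose_neg_natCast, gchoose_neg_natCast, wzTerm,
    show k + (j + k + 1) = j + 2 * k + 1 by ring, show j + (j + k + 1) = 2 * j + k + 1 by ring]
  linear_combination (-1 : ℚ) ^ (j + 1) * ((j + k + 2).choose (j + 1) : ℚ) *
    ((j + 2 * k + 1).choose k : ℚ) * ((2 * j + k + 1).choose j : ℚ) * hsign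

theorem sum_summand_eq_sum_antidiagonal (q : ℕ) :
    ∑ i ∈ Icc 1 (2 * (q + 1) - 1), summand (q + 1) i =
      ∑ x ∈ antidiagonal (2 * q), wzTerm x.1 x.2 := by
  rw [show 2 * (q + 1) - 1 = 2 * q + 1 by omega, ← Ico_add_one_right_eq_Icc, ← zero_add 1,
    ← sum_Ico_add', ← range_eq_Ico, Nat.sum_antidiagonal_eq_sum_range_succ_mk]
  exact sum_congr rfl fun j hj =>
    summand_eq_wzTerm q j (2 * q - j) (by rw [mem_range] at hj; omega)

theorem wzTerm_eq_factorial (j k : ℕ) :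
    wzTerm j k = (-1) ^ (j + 1) * (j + k + 2)! * (j + 2 * k + 1)! * (2 * j + k + 1)! /
      ((j + 1)! * (k + 1)! * k ! * j ! * (j + k + 1)! ^ 2) := by
  rw [wzTerm, cast_choose ℚ (by omega), cast_choose ℚ (by omega), cast_choose ℚ (by omega),
    show j + k + 2 - (j + 1) = k + 1 by omega, show j + 2 * k + 1 - k = j + k + 1 by omega,
    show 2 * j + k + 1 - j = j + k + 1 by omega]
  field_simp

theorem wzPoly_one (p : ℚ) : wzPoly p 1 = 0 := by
  unfold wzPoly; ring

theorem wzCert_zero_left (b : ℕ) : wzCert 0 b = 0 := by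
  simp [wzCert, wzPoly_one]

theorem wzTerm_telescoping (n j k : ℕ) (h : j + k = n) :
    ((n : ℚ) + 3) * ((n : ℚ) + 2) ^ 3 * wzTerm j (k + 2) +
      (3 * (n : ℚ) + 8) * (3 * n + 6) * (3 * n + 4) * (n + 1) * wzTerm j k =
    wzCert (j + 1) k - wzCert j (k + 1) := by
  subst h
  rw [wzTerm_eq_factorial, wzTerm_eq_factorial, wzCert, wzCert,
    show j + 1 + 2 * k - 1 = j + 2 * k by omega, show j + 2 * (k + 1) - 1 = j + 2 * k + 1 by omega,
    show 2 * (j + 1) + k = 2 * j + k + 2 by ring, show j + 1 + k = j + k + 1 by ring]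
  simp only [mul_add, ← add_assoc, factorial_succ]
  push_cast
  field_simp
  unfold wzPoly
  ring

theorem wzCert_add_wzTerm_boundary (n : ℕ) :
    wzCert (n + 1) 0 +
      ((n : ℚ) + 3) * ((n : ℚ) + 2) ^ 3 * (wzTerm (n + 1) 1 + wzTerm (n + 2) 0) = 0 := by
  rw [wzTerm_eq_factorial, wzTerm_eq_factorial, wzCert, show n + 1 + 2 * 0 - 1 = n by omega]
  simp only [mul_add, mul_zero, add_zero, ← add_assoc, factorial_succ]
  push_cast
  field_simp
  unfold wzPoly
  ring

theorem sum_wzTerm_recurrence (n : ℕ) :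
    ((n : ℚ) + 3) * ((n : ℚ) + 2) ^ 3 * ∑ x ∈ antidiagonal (n + 2), wzTerm x.1 x.2 +
      (3 * (n : ℚ) + 8) * (3 * n + 6) * (3 * n + 4) * (n + 1) *
        ∑ x ∈ antidiagonal n, wzTerm x.1 x.2 = 0 := by
  have hsplit : ∑ x ∈ antidiagonal (n + 2), wzTerm x.1 x.2 =
      wzTerm (n + 2) 0 + wzTerm (n + 1) 1 + ∑ x ∈ antidiagonal n, wzTerm x.1 (x.2 + 2) := by
    rw [Nat.sum_antidiagonal_succ', Nat.sum_antidiagonal_succ', ← add_assoc]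
  have hpairs : ∑ x ∈ antidiagonal n,
      (((n : ℚ) + 3) * ((n : ℚ) + 2) ^ 3 * wzTerm x.1 (x.2 + 2) +
        (3 * (n : ℚ) + 8) * (3 * n + 6) * (3 * n + 4) * (n + 1) * wzTerm x.1 x.2) =
      wzCert (n + 1) 0 - wzCert 0 (n + 1) := by
    rw [← sum_antidiagonal_sub wzCert]
    exact sum_congr rfl fun x hx => wzTerm_telescoping n x.1 x.2 (mem_antidiagonal.mp hx)
  rw [sum_add_distrib, ← mul_sum, ← mul_sum, wzCert_zero_left] at hpairs
  rw [hsplit]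
  linear_combination hpairs + wzCert_add_wzTerm_boundary n

theorem closedForm_recurrence (q : ℕ) :
    (2 * (q : ℚ) + 3) * (2 * q + 2) ^ 3 * closedForm (q + 1) +
      (6 * (q : ℚ) + 8) * (6 * q + 6) * (6 * q + 4) * (2 * q + 1) * closedForm q = 0 := by
  rw [closedForm, closedForm, show 3 * (q + 1) + 1 = 3 * q + 1 + 3 by ring]
  simp only [factorial_succ]
  push_cast
  field_simp
  ring

theorem sum_wzTerm_eq_closedForm (q : ℕ) :
    ∑ x ∈ antidiagonal (2 * q), wzTerm x.1 x.2 = closedForm q := by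
  refine eq_of_linear_recurrence (u := fun q => ∑ x ∈ antidiagonal (2 * q), wzTerm x.1 x.2)
    (c := fun q => (2 * (q : ℚ) + 3) * (2 * q + 2) ^ 3)
    (d := fun q => (6 * (q : ℚ) + 8) * (6 * q + 6) * (6 * q + 4) * (2 * q + 1))
    (fun q => by positivity) (fun q => ?_) closedForm_recurrence
    (by norm_num [closedForm, wzTerm]) q
  have h := sum_wzTerm_recurrence (2 * q)
  rw [show 2 * (q + 1) = 2 * q + 2 by ring]
  push_cast at h
  linear_combination h

/-- For every integer `p ≥ 1`,
`f(p) = ∑_{i=1}^{2p-1} (-1)^i C(2p,i) C(-2p,2p-1-i) C(-2p,i-1)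
      = (-1)^p · 2 · (3p-2)! / ((2p-1) ((p-1)!)^3)`. -/
theorem stmt2 (p : ℕ) (hp : 1 ≤ p) :
    ∑ i ∈ Finset.Icc 1 (2 * p - 1),
      (-1 : ℚ) ^ i * gchoose (2 * p) i * gchoose (-2 * p) (2 * p - 1 - i) *
        gchoose (-2 * p) (i - 1)
    = (-1 : ℚ) ^ p * 2 * (Nat.factorial (3 * p - 2)) /
        ((2 * (p : ℚ) - 1) * (Nat.factorial (p - 1) : ℚ) ^ 3) := by
  obtain ⟨q, rfl⟩ : ∃ q, p = q + 1 := ⟨p - 1, by omega⟩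
  change ∑ i ∈ Icc 1 (2 * (q + 1) - 1), summand (q + 1) i = _
  rw [sum_summand_eq_sum_antidiagonal, sum_wzTerm_eq_closedForm, closedForm,
    show 3 * (q + 1) - 2 = 3 * q + 1 by omega, add_tsub_cancel_right]
  push_cast
  ring
end

section
/- For every integer p ≥ 2, the sum f(p) = Σ_{i=1}^{2p-1} (-1)^i C(2p,i) C(-2p, 2p-1-i) C(-2p, i-1) satisfies the recurrence 3(3p-4)(2p-3)(3p-2) * f(p-1) + (2p-1)(p-1)^2 * f(p) = 0. -/
/-- `f(p) = ∑_{i=1}^{2p-1} (-1)^i C(2p,i) C(-2p,2p-1-i) C(-2p,i-1)`. -/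
def f (p : ℕ) : ℚ :=
  ∑ i ∈ Finset.Icc 1 (2 * p - 1),
    (-1 : ℚ) ^ i * gchoose (2 * p) i * gchoose (-2 * p) (2 * p - 1 - i) *
      gchoose (-2 * p) (i - 1)

open Finset

lemma gchoose_succ_mul (t : ℚ) (k : ℕ) :
    gchoose t (k + 1) * (k + 1) = gchoose t k * (t - k) := by
  simp only [gchoose, prod_range_succ, Nat.factorial_succ]
  push_cast
  field_simp

lemma gchoose_mul_sub_mul_sub (t : ℚ) (k : ℕ) :
    gchoose t k * ((t - k) * (t - 1 - k)) = gchoose (t - 2) k * (t * (t - 1)) := by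
  have hprod : (∏ j ∈ range k, (t - j)) * ((t - k) * (t - 1 - k)) =
      (∏ j ∈ range k, (t - 2 - j)) * (t * (t - 1)) :=
    calc (∏ j ∈ range k, (t - j)) * ((t - k) * (t - 1 - k))
        _ = ∏ j ∈ range (k + 2), (t - j) := by
          rw [prod_range_succ, prod_range_succ]; push_cast; ring
        _ = (∏ j ∈ range k, (t - 2 - j)) * (t * (t - 1)) := by
          rw [prod_range_succ', prod_range_succ']; push_cast; ring_nf
  simp only [gchoose, div_mul_eq_mul_div, hprod]

lemma gchoose_sub_two_add_two (t : ℚ) (k : ℕ) :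
    gchoose (t - 2) (k + 2) * ((k + 1) * (k + 2) * (t * (t - 1))) =
      gchoose t k * ((t - k) * (t - 1 - k) * (t - 2 - k) * (t - 3 - k)) := by
  have h₁ := gchoose_succ_mul (t - 2) k
  have h₂ := gchoose_succ_mul (t - 2) (k + 1)
  have h₃ := gchoose_mul_sub_mul_sub t k
  push_cast at h₂
  linear_combination (t * (t - 1) * (k + 1)) * h₂ + (t * (t - 1) * (t - 2 - (k + 1))) * h₁
    - ((t - 2 - k) * (t - 3 - k)) * h₃

def term (p i : ℕ) : ℚ :=
  (-1) ^ i * gchoose (2 * p) i * gchoose (-2 * p) (2 * p - 1 - i) * gchoose (-2 * p) (i - 1)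

def indexRatio (q j : ℚ) : ℚ :=
  (2 * q - j) * (2 * q - 1 - j) * (2 * q + j - 1) / (j * (j + 1) * (j + 2 - 4 * q))

def paramRatio (q j : ℚ) : ℚ :=
  (2 * q + 2) * (2 * q + 1) * ((4 * q - 1 - j) * (4 * q - j) * (4 * q + 1 - j) * (4 * q + 2 - j)) *
      ((2 * q + j - 1) * (2 * q + j)) /
    ((2 * q + 2 - j) * (2 * q + 1 - j) * ((2 * q - j) * (2 * q + 1 - j) * (2 * q * (2 * q + 1))) *
      (2 * q * (2 * q + 1)))

lemma term_index_succ (q j : ℕ) (hj : 1 ≤ j) (hjq : j + 2 ≤ 2 * q) :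
    term q (j + 1) = term q j * indexRatio q j := by
  have hden : (j : ℚ) * (j + 1) * (j + 2 - 4 * q) ≠ 0 := by
    have : (j : ℚ) + 2 ≤ 2 * q := by exact_mod_cast hjq
    have : (j : ℚ) + 2 - 4 * q ≠ 0 := by intro h; linarith
    have : (j : ℚ) ≠ 0 := by positivity
    positivity
  rw [indexRatio, ← mul_div_assoc, eq_div_iff hden]
  obtain ⟨i, rfl⟩ : ∃ i, j = i + 1 := ⟨j - 1, by omega⟩
  obtain ⟨k, hk⟩ : ∃ k, 2 * q - 1 - (i + 1) = k + 1 := ⟨2 * q - i - 3, by omega⟩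
  have hkq : (k : ℚ) = 2 * q - i - 3 := by
    have : (k : ℤ) = 2 * q - i - 3 := by omega
    exact_mod_cast this
  have hX := gchoose_succ_mul (2 * q) (i + 1)
  have hY := gchoose_succ_mul (-2 * q) k
  have hZ := gchoose_succ_mul (-2 * q) i
  push_cast at hX hY hZ ⊢
  calc term q (i + 1 + 1) * ((i + 1) * (i + 1 + 1) * (i + 1 + 2 - 4 * q))
      _ = -(-1) ^ (i + 1) * (gchoose (2 * q) (i + 1 + 1) * (i + 1 + 1)) *
            (gchoose (-2 * q) k * (-2 * q - k)) * (gchoose (-2 * q) (i + 1) * (i + 1)) := by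
        simp only [term, show 2 * q - 1 - (i + 1 + 1) = k by omega, Nat.add_sub_cancel]
        rw [hkq]; ring
      _ = -(-1) ^ (i + 1) * (gchoose (2 * q) (i + 1) * (2 * q - (i + 1))) *
            (gchoose (-2 * q) (k + 1) * (k + 1)) * (gchoose (-2 * q) i * (-2 * q - i)) := by
        rw [hX, hY, hZ]
      _ = term q (i + 1) * ((2 * q - (i + 1)) * (2 * q - 1 - (i + 1)) * (2 * q + (i + 1) - 1)) := by
        simp only [term, hk, Nat.add_sub_cancel]
        rw [hkq]; ring

lemma term_param_succ (q j : ℕ) (hj : 1 ≤ j) (hjq : j < 2 * q) :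
    term (q + 1) j = term q j * paramRatio q j := by
  have hden : (2 * q + 2 - j : ℚ) * (2 * q + 1 - j) * ((2 * q - j) * (2 * q + 1 - j) *
      (2 * q * (2 * q + 1))) * (2 * q * (2 * q + 1)) ≠ 0 := by
    have : (j : ℚ) + 1 ≤ 2 * q := by exact_mod_cast hjq
    have : (0 : ℚ) < 2 * q - j := by linarith
    have : (0 : ℚ) < 2 * q + 1 - j := by linarith
    have : (0 : ℚ) < 2 * q + 2 - j := by linarith
    have : (0 : ℚ) < q := by linarith
    positivity
  rw [paramRatio, ← mul_div_assoc, eq_div_iff hden]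
  obtain ⟨i, rfl⟩ : ∃ i, j = i + 1 := ⟨j - 1, by omega⟩
  obtain ⟨k, hk⟩ : ∃ k, 2 * q - 1 - (i + 1) = k := ⟨_, rfl⟩
  have hkq : (k : ℚ) = 2 * q - i - 2 := by
    have : (k : ℤ) = 2 * q - i - 2 := by omega
    exact_mod_cast this
  have hX := gchoose_mul_sub_mul_sub (2 * q + 2) (i + 1)
  have hY := gchoose_sub_two_add_two (-2 * q) k
  have hZ := gchoose_mul_sub_mul_sub (-2 * q) i
  rw [show (2 * q + 2 - 2 : ℚ) = 2 * q by ring] at hX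
  push_cast at hX hY hZ ⊢
  calc term (q + 1) (i + 1) * ((2 * q + 2 - (i + 1)) * (2 * q + 1 - (i + 1)) *
        ((2 * q - (i + 1)) * (2 * q + 1 - (i + 1)) * (2 * q * (2 * q + 1))) * (2 * q * (2 * q + 1)))
      _ = (-1) ^ (i + 1) *
            (gchoose (2 * q + 2) (i + 1) * ((2 * q + 2 - (i + 1)) * (2 * q + 2 - 1 - (i + 1)))) *
            (gchoose (-2 * q - 2) (k + 2) * ((k + 1) * (k + 2) * (-2 * q * (-2 * q - 1)))) *
            (gchoose (-2 * q - 2) i * (-2 * q * (-2 * q - 1))) := by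
        simp only [term, show 2 * (q + 1) - 1 - (i + 1) = k + 2 by omega, Nat.add_sub_cancel]
        push_cast
        rw [show -2 * ((q : ℚ) + 1) = -2 * q - 2 by ring, show 2 * ((q : ℚ) + 1) = 2 * q + 2 by ring, hkq]
        ring
      _ = (-1) ^ (i + 1) * (gchoose (2 * q) (i + 1) * ((2 * q + 2) * (2 * q + 2 - 1))) *
            (gchoose (-2 * q) k * ((-2 * q - k) * (-2 * q - 1 - k) * (-2 * q - 2 - k) * (-2 * q - 3 - k))) *
            (gchoose (-2 * q) i * ((-2 * q - i) * (-2 * q - 1 - i))) := by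
        rw [hX, hY, hZ]
      _ = term q (i + 1) * ((2 * q + 2) * (2 * q + 1) *
            ((4 * q - 1 - (i + 1)) * (4 * q - (i + 1)) * (4 * q + 1 - (i + 1)) * (4 * q + 2 - (i + 1))) *
            ((2 * q + (i + 1) - 1) * (2 * q + (i + 1)))) := by
        simp only [term, hk, Nat.add_sub_cancel]
        rw [hkq]; ring

/-- The rational certificate of the recurrence, as produced by Zeilberger's algorithm. -/
def certificate (q i : ℚ) : ℚ :=
  i * (i - 1) * (i + 1 - 4 * q) *
      (2 * q * (344 * q ^ 4 + 368 * q ^ 3 + 98 * q ^ 2 - 2)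
        - 2 * (260 * q ^ 4 + 190 * q ^ 3 + 44 * q ^ 2 + 7 * q + 1) * i
        + (120 * q ^ 3 + 74 * q ^ 2 + 31 * q + 5) * i ^ 2
        - 2 * (5 * q + 2) * (q + 1) * i ^ 3 + (q + 1) * i ^ 4) /
    (4 * q * (i - 2 * q) * (i - 2 * q - 1) ^ 2 * (i - 2 * q - 2))

lemma certificate_telescopes (q j : ℚ) (hj : 1 ≤ j) (hjq : j + 2 ≤ 2 * q) :
    (2 * q + 1) * q ^ 2 * paramRatio q j + 3 * (3 * q - 1) * (2 * q - 1) * (3 * q + 1) =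
      certificate q (j + 1) * indexRatio q j - certificate q j := by
  have h₁ : j + 2 - 4 * q ≠ 0 := by intro h; linarith
  have h₂ : j - 2 * q ≠ 0 := by intro h; linarith
  have h₃ : j - 2 * q - 1 ≠ 0 := by intro h; linarith
  have h₄ : j - 2 * q - 2 ≠ 0 := by intro h; linarith
  have h₅ : j + 1 - 2 * q ≠ 0 := by intro h; linarith
  have h₆ : j + 1 - 2 * q - 1 ≠ 0 := by intro h; linarith
  have h₇ : j + 1 - 2 * q - 2 ≠ 0 := by intro h; linarith
  have h₈ : 2 * q + 2 - j ≠ 0 := by intro h; linarith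
  have h₉ : 2 * q + 1 - j ≠ 0 := by intro h; linarith
  have h₁₀ : 2 * q - j ≠ 0 := by intro h; linarith
  have h₁₁ : 2 * q + 1 ≠ 0 := by intro h; linarith
  have h₁₂ : q ≠ 0 := by intro h; linarith
  have h₁₃ : j ≠ 0 := by intro h; linarith
  have h₁₄ : j + 1 ≠ 0 := by intro h; linarith
  simp only [certificate, paramRatio, indexRatio]
  rw [mul_div_assoc', div_add' _ _ _ (by simp [*]), div_mul_div_comm,
    div_sub_div _ _ (by simp [*]) (by simp [*]), div_eq_div_iff (by simp [*]) (by simp [*])]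
  ring

lemma certificate_boundary (q : ℚ) (hq : 1 ≤ q) :
    certificate q (2 * q - 1) + 3 * (3 * q - 1) * (2 * q - 1) * (3 * q + 1) +
      (2 * q + 1) * q ^ 2 * paramRatio q (2 * q - 1) *
        (1 + indexRatio (q + 1) (2 * q - 1) * (1 + indexRatio (q + 1) (2 * q))) = 0 := by
  have h₁ : 2 * q - 1 ≠ 0 := by intro h; linarith
  have h₂ : 2 * q + 1 ≠ 0 := by intro h; linarith
  have h₃ : 2 * q + 3 ≠ 0 := by intro h; linarith
  have h₄ : q ≠ 0 := by intro h; linarith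
  simp only [certificate, paramRatio, indexRatio]
  rw [show 2 * q - 1 + 2 - 4 * (q + 1) = -(2 * q + 3) by ring,
    show 2 * q + 2 - 4 * (q + 1) = -(2 * (q + 1)) by ring]
  field_simp
  ring

def certificateTerm (q j : ℕ) : ℚ := certificate q j * term q j

lemma term_telescopes (q j : ℕ) (hj : 1 ≤ j) (hjq : j + 2 ≤ 2 * q) :
    (2 * q + 1) * q ^ 2 * term (q + 1) j + 3 * (3 * q - 1) * (2 * q - 1) * (3 * q + 1) * term q j =
      certificateTerm q (j + 1) - certificateTerm q j := by
  rw [certificateTerm, certificateTerm, term_param_succ q j hj (by omega), term_index_succ q j hj hjq]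
  push_cast
  linear_combination term q j *
    certificate_telescopes q j (by exact_mod_cast hj) (by exact_mod_cast hjq)

lemma sum_term_telescopes (q : ℕ) (hq : 1 ≤ q) :
    ∑ j ∈ Ico 1 (2 * q - 1), ((2 * q + 1) * q ^ 2 * term (q + 1) j +
      3 * (3 * q - 1) * (2 * q - 1) * (3 * q + 1) * term q j) = certificateTerm q (2 * q - 1) := by
  rw [sum_congr rfl fun j hj => term_telescopes q j (mem_Ico.1 hj).1 (by grind),
    sum_Ico_sub _ (by omega)]
  simp [certificateTerm, certificate]

lemma term_boundary (q : ℕ) (hq : 1 ≤ q) :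
    certificateTerm q (2 * q - 1) + 3 * (3 * q - 1) * (2 * q - 1) * (3 * q + 1) * term q (2 * q - 1) +
      (2 * q + 1) * q ^ 2 *
        (term (q + 1) (2 * q - 1) + term (q + 1) (2 * q) + term (q + 1) (2 * q + 1)) = 0 := by
  have h₁ := term_param_succ q (2 * q - 1) (by omega) (by omega)
  have h₂ := term_index_succ (q + 1) (2 * q - 1) (by omega) (by omega)
  have h₃ := term_index_succ (q + 1) (2 * q) (by omega) (by omega)
  rw [Nat.sub_add_cancel (by omega)] at h₂
  rw [certificateTerm, h₃, h₂, h₁]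
  have hcast : ((2 * q - 1 : ℕ) : ℚ) = 2 * q - 1 := by rw [Nat.cast_sub (by omega)]; push_cast; ring
  push_cast [hcast]
  linear_combination term q (2 * q - 1) * certificate_boundary q (by exact_mod_cast hq)

lemma f_eq_sum_Ico (p : ℕ) : f p = ∑ i ∈ Ico 1 (2 * p), term p i := by
  rcases Nat.eq_zero_or_pos p with rfl | hp
  · rfl
  · rw [f, ← Ico_add_one_right_eq_Icc, Nat.sub_add_cancel (by omega)]
    rfl

lemma f_recurrence (q : ℕ) (hq : 1 ≤ q) :
    3 * (3 * (q : ℚ) - 1) * (2 * q - 1) * (3 * q + 1) * f q + (2 * q + 1) * q ^ 2 * f (q + 1) = 0 := by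
  have hsum := sum_term_telescopes q hq
  have hbdry := term_boundary q hq
  rw [sum_add_distrib, ← mul_sum, ← mul_sum] at hsum
  obtain ⟨m, hm⟩ : ∃ m, 2 * q = m + 1 := ⟨2 * q - 1, by omega⟩
  rw [show 2 * q - 1 = m by omega] at hsum hbdry
  rw [hm] at hbdry
  rw [f_eq_sum_Ico, f_eq_sum_Ico, show 2 * (q + 1) = m + 1 + 1 + 1 by omega, hm,
    sum_Ico_succ_top (by omega), sum_Ico_succ_top (by omega), sum_Ico_succ_top (by omega),
    sum_Ico_succ_top (by omega)]
  linear_combination hsum + hbdry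

/-- For every integer `p ≥ 2`,
`3(3p-4)(2p-3)(3p-2) f(p-1) + (2p-1)(p-1)^2 f(p) = 0`. -/
theorem stmt3 (p : ℕ) (hp : 2 ≤ p) :
    3 * (3 * (p : ℚ) - 4) * (2 * (p : ℚ) - 3) * (3 * (p : ℚ) - 2) * f (p - 1)
      + (2 * (p : ℚ) - 1) * ((p : ℚ) - 1) ^ 2 * f p = 0 := by
  obtain ⟨q, rfl⟩ : ∃ q, p = q + 1 := ⟨p - 1, by omega⟩
  rw [Nat.add_sub_cancel]
  push_cast
  linear_combination f_recurrence q (by omega)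
end

section
/- For integer p ≥ 2, the polynomial G_p(t) = Σ_{i,j,k} C(2p,i) C(-2p,j) C(-2p,k) C(t,2p-1-i-j) C(t,i-1-k) C(2p-1-t,2p+j+k+1) (sum over 1 ≤ i ≤ 2p-1, 0 ≤ j ≤ 2p-i-1, 0 ≤ k ≤ i-1) vanishes at every integer t with 0 ≤ t ≤ 2p-1. -/
/-- Polynomial generalized binomial coefficient. -/
noncomputable def pchoose (s : Polynomial ℚ) (k : ℕ) : Polynomial ℚ :=
  ((Nat.factorial k : ℚ)⁻¹) • ∏ j ∈ Finset.range k, (s - Polynomial.C (j : ℚ))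

open Polynomial in
/-- The triple-binomial sum `G_p(t)` as a polynomial in `t`. -/
noncomputable def Gpoly (p : ℕ) : Polynomial ℚ :=
  ∑ i ∈ Finset.Icc 1 (2 * p - 1), ∑ j ∈ Finset.range (2 * p - i), ∑ k ∈ Finset.range i,
    C (gchoose (2 * p) i * gchoose (-2 * p) j * gchoose (-2 * p) k) *
      pchoose X (2 * p - 1 - i - j) * pchoose X (i - 1 - k) *
      pchoose (C (2 * (p : ℚ) - 1) - X) (2 * p + j + k + 1)

/-! In every summand the last factor is `C(2p-1-t, 2p+j+k+1)` with `0 ≤ 2p-1-t < 2p+j+k+1`,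
a binomial coefficient of a natural number below its lower index, so every summand vanishes. -/

open Polynomial

theorem gchoose_natCast_eq_zero {n k : ℕ} (h : n < k) : gchoose n k = 0 := by
  rw [gchoose, Finset.prod_eq_zero (Finset.mem_range.mpr h) (sub_self _), zero_div]

theorem eval_pchoose (s : ℚ[X]) (k : ℕ) (x : ℚ) :
    (pchoose s k).eval x = gchoose (s.eval x) k := by
  simp [pchoose, gchoose, eval_prod, div_eq_inv_mul]

theorem stmt8_general (p : ℕ) (t : ℤ) (h0 : 0 ≤ t) (h1 : t ≤ 2 * (p : ℤ) - 1) :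
    (Gpoly p).eval (t : ℚ) = 0 := by
  lift t to ℕ using h0
  have hlast (j k : ℕ) :
      (pchoose (C (2 * (p : ℚ) - 1) - X) (2 * p + j + k + 1)).eval ((t : ℤ) : ℚ) = 0 := by
    have hcomp : 2 * (p : ℚ) - 1 - t = ((2 * p - 1 - t : ℕ) : ℚ) := by
      rw [Nat.cast_sub (by omega), Nat.cast_sub (by omega)]
      push_cast
      ring
    rw [eval_pchoose, eval_sub, eval_C, eval_X, Int.cast_natCast, hcomp]
    exact gchoose_natCast_eq_zero (by omega)
  simp only [Gpoly, eval_finsetSum, eval_mul, hlast, mul_zero, Finset.sum_const_zero]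

/-- For `p ≥ 2`, `G_p(t)` vanishes at every integer `t` with `0 ≤ t ≤ 2p-1`. -/
theorem stmt8 (p : ℕ) (hp : 2 ≤ p) (t : ℤ) (h0 : 0 ≤ t) (h1 : t ≤ 2 * (p : ℤ) - 1) :
    (Gpoly p).eval (t : ℚ) = 0 :=
  stmt8_general p t h0 h1
end
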